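/- arXiv:1906.07619 — 2 statements merged into one kernel-verified Lean document; each statement's English description precedes it below -/
import Mathlib

section
/- Let G be a maximal 3-γc-vertex critical graph of order n. Then ω(G) ≤ n − 3, and equality holds if and only if G is isomorphic to the cycle C₅ on five vertices. -/
open Finset

variable {V : Type*}

/-- `D` is a connected dominating set of `G`: every vertex is in `D` or adjacent to a
vertex of `D`, and the subgraph induced by `D` is connected. -/
def IsConnDomSet (G : SimpleGraph V) (D : Set V) : Prop :=
  (∀ v : V, v ∈ D ∨ ∃ u ∈ D, G.Adj u v) ∧ (G.induce D).Connected

/-- The connected domination number `γc(G)`. -/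
noncomputable def gammaC (G : SimpleGraph V) [Fintype V] : ℕ :=
  sInf {k | ∃ D : Finset V, D.card = k ∧ IsConnDomSet G ↑D}

/-- The independence number `α(G)`. -/
noncomputable def alpha (G : SimpleGraph V) [Fintype V] : ℕ :=
  sSup {k | ∃ I : Finset V, I.card = k ∧ (↑I : Set V).Pairwise fun u v => ¬ G.Adj u v}

/-- The clique number `ω(G)`. -/
noncomputable def omegaNum (G : SimpleGraph V) [Fintype V] : ℕ :=
  sSup {k | ∃ W : Finset V, W.card = k ∧ (↑W : Set V).Pairwise G.Adj}

/-- The minimum degree `δ(G)`. -/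
noncomputable def minDeg (G : SimpleGraph V) [Fintype V] : ℕ :=
  sInf {k | ∃ v : V, (G.neighborSet v).ncard = k}

/-- The vertex connectivity `κ(G)`: the minimum size of a set of vertices whose
deletion leaves a graph that is disconnected or has at most one vertex
(so `κ = n - 1` for the complete graph on `n` vertices). -/
noncomputable def kappa (G : SimpleGraph V) [Fintype V] : ℕ :=
  sInf {k | ∃ S : Finset V, S.card = k ∧
    (¬ (G.induce (↑S : Set V)ᶜ).Connected ∨ ((↑S : Set V)ᶜ).Subsingleton)}

/-- `G` is `3`-`γc`-edge critical: `γc(G) = 3` and adding any missing edge decreases `γc`. -/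
def EdgeCritical3 (G : SimpleGraph V) [Fintype V] : Prop :=
  gammaC G = 3 ∧ ∀ u v : V, u ≠ v → ¬ G.Adj u v →
    gammaC (G ⊔ SimpleGraph.fromEdgeSet {s(u, v)}) < 3

/-- `G` is `3`-`γc`-vertex critical: `G` is `2`-connected, `γc(G) = 3` and deleting any
vertex decreases `γc`. -/
def VertexCritical3 (G : SimpleGraph V) [Fintype V] [DecidableEq V] : Prop :=
  2 ≤ kappa G ∧ gammaC G = 3 ∧ ∀ v : V, gammaC (G.induce {w | w ≠ v}) < 3

/-- `G` is maximal `3`-`γc`-vertex critical. -/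
def MaximalVertexCritical3 (G : SimpleGraph V) [Fintype V] [DecidableEq V] : Prop :=
  EdgeCritical3 G ∧ VertexCritical3 G

/-!
Let `W` be a clique and `S` its complement. As `γc(G) = 3`, no vertex and no edge dominates `G`;
as `γc(G - v) ≤ 2` and `G` is connected, for every vertex `v` some edge `ab` dominates `G - v`
while `v` has no neighbour in `{a, b}`. For `v ∈ W` this edge lies in `S`. Two complementary
cliques are joined by a dominating edge, so `S` is not a clique; hence `|S| ≥ 3`, and if `|S| = 3`
then `S` induces a path `x y z`. Then `y` has no neighbour in `W` and no vertex of `W` sees both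
`x` and `z`. The edge avoiding `y` gives `p, q ∈ W` with `p ~ x` and `q ~ z`, while the edge
avoiding any other `v ∈ W` would have to contain both `x` and `z`. So `W = {p, q}` and `G` is the
five-cycle `x y z q p`.
-/

namespace SimpleGraph

variable {G : SimpleGraph V}

structure IsDominatingPair (G : SimpleGraph V) (a b : V) : Prop where
  eq_or_adj : a = b ∨ G.Adj a b
  adj_or_adj : ∀ w, w ≠ a → w ≠ b → G.Adj a w ∨ G.Adj b w

structure IsDominatingEdgeAvoiding (G : SimpleGraph V) (v a b : V) : Prop where
  adj : G.Adj a b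
  not_adj_left : ¬ G.Adj v a
  not_adj_right : ¬ G.Adj v b
  adj_or_adj : ∀ w, w ≠ v → w ≠ a → w ≠ b → G.Adj a w ∨ G.Adj b w

lemma adj_of_connected_induce_pair {a b : V} (hab : a ≠ b)
    (h : (G.induce {a, b}).Connected) : G.Adj a b := by
  have : Nontrivial ({a, b} : Set V) := ⟨⟨a, by simp⟩, ⟨b, by simp⟩, by simp [hab]⟩
  obtain ⟨⟨c, hc⟩, hac⟩ := h.preconnected.exists_adj_of_nontrivial ⟨a, by simp⟩
  rcases hc with rfl | rfl
  · exact absurd hac (G.induce _).irrefl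
  · exact hac

lemma IsDominatingPair.gammaC_le_two [Fintype V] {a b : V} (h : G.IsDominatingPair a b) :
    gammaC G ≤ 2 := by
  classical
  have hconn : (G.induce ({a, b} : Set V)).Connected := by
    rcases h.eq_or_adj with rfl | hab
    · rw [Set.pair_eq_singleton, induce_singleton_eq_top]
      exact connected_top
    · exact induce_pair_connected_of_adj hab
  have hcds : IsConnDomSet G ↑({a, b} : Finset V) := by
    refine ⟨fun w => ?_, by rwa [Finset.coe_pair]⟩
    by_cases hwa : w = a
    · simp [hwa]
    by_cases hwb : w = b
    · simp [hwb]
    rcases h.adj_or_adj w hwa hwb with haw | hbw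
    · exact Or.inr ⟨a, by simp, haw⟩
    · exact Or.inr ⟨b, by simp, hbw⟩
  exact (Nat.sInf_le (show _ ∈ {k | ∃ D : Finset V, D.card = k ∧ IsConnDomSet G ↑D} from
    ⟨_, rfl, hcds⟩)).trans Finset.card_le_two

lemma Connected.exists_isDominatingPair [Fintype V] (hG : G.Connected) (h : gammaC G ≤ 2) :
    ∃ a b, G.IsDominatingPair a b := by
  classical
  have hne : {k | ∃ D : Finset V, D.card = k ∧ IsConnDomSet G ↑D}.Nonempty :=
    ⟨_, Finset.univ, rfl, fun v => Or.inl (by simp),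
      by rw [Finset.coe_univ]; exact (induceUnivIso G).connected_iff.mpr hG⟩
  obtain ⟨D, hD, hdom, hconn⟩ := Nat.sInf_mem hne
  have hD : D.card ≤ 2 := hD ▸ h
  have hpos : 0 < D.card :=
    Finset.card_pos.mpr (Finset.coe_nonempty.mp (Set.nonempty_coe_sort.mp hconn.nonempty))
  rcases (by omega : D.card = 1 ∨ D.card = 2) with h1 | h2
  · obtain ⟨a, rfl⟩ := Finset.card_eq_one.mp h1
    exact ⟨a, a, ⟨Or.inl rfl, fun w hwa _ => by simpa [hwa] using hdom w⟩⟩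
  · obtain ⟨a, b, hab, rfl⟩ := Finset.card_eq_two.mp h2
    rw [Finset.coe_pair] at hconn
    exact ⟨a, b, Or.inr (adj_of_connected_induce_pair hab hconn),
      fun w hwa hwb => by simpa [hwa, hwb] using hdom w⟩

lemma connected_of_pos_kappa [Fintype V] (h : 0 < kappa G) : G.Connected := by
  by_contra hG
  have : kappa G ≤ 0 := Nat.sInf_le ⟨∅, rfl, Or.inl fun hG' => hG ?_⟩
  · omega
  rw [Finset.coe_empty, Set.compl_empty] at hG'
  exact (induceUnivIso G).connected_iff.mp hG'

lemma connected_induce_ne_of_one_lt_kappa [Fintype V] (h : 1 < kappa G) (v : V) :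
    (G.induce {w | w ≠ v}).Connected := by
  by_contra hG
  have : kappa G ≤ 1 := Nat.sInf_le ⟨{v}, rfl, Or.inl ?_⟩
  · omega
  rwa [Finset.coe_singleton, Set.compl_singleton_eq]

lemma IsDominatingEdgeAvoiding.left_ne {v a b : V} (h : G.IsDominatingEdgeAvoiding v a b) :
    a ≠ v := by
  rintro rfl
  exact h.not_adj_right h.adj

lemma IsDominatingEdgeAvoiding.right_ne {v a b : V} (h : G.IsDominatingEdgeAvoiding v a b) :
    b ≠ v := by
  rintro rfl
  exact h.not_adj_left h.adj.symm

lemma exists_isDominatingEdgeAvoiding [Fintype V] [DecidableEq V] (hG : G.Connected)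
    (hdom : ∀ a b, ¬ G.IsDominatingPair a b) {v : V} (hv : (G.induce {w | w ≠ v}).Connected)
    (hlt : gammaC (G.induce {w | w ≠ v}) < 3) : ∃ a b, G.IsDominatingEdgeAvoiding v a b := by
  obtain ⟨⟨a, ha⟩, ⟨b, hb⟩, hab, hcover⟩ := hv.exists_isDominatingPair (by omega)
  have hab : a = b ∨ G.Adj a b := by simpa using hab
  have hcover : ∀ w, w ≠ v → w ≠ a → w ≠ b → G.Adj a w ∨ G.Adj b w := fun w hw hwa hwb =>
    hcover ⟨w, hw⟩ (by simpa using hwa) (by simpa using hwb)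
  have hav : ¬ G.Adj a v ∧ ¬ G.Adj b v := by
    rw [← not_or]
    refine fun hv' => hdom a b ⟨hab, fun w hwa hwb => ?_⟩
    by_cases hwv : w = v
    · exact hwv ▸ hv'
    · exact hcover w hwv hwa hwb
  rcases hab with rfl | hab
  · -- `a` dominates `G - v`, so `a` and a neighbour of `v` would dominate `G`
    have : Nontrivial V := ⟨⟨a, v, ha⟩⟩
    obtain ⟨u, hvu⟩ := hG.preconnected.exists_adj_of_nontrivial v
    have hua : u ≠ a := by
      rintro rfl
      exact hav.1 hvu.symm
    refine (hdom a u ⟨Or.inr ((hcover u hvu.ne' hua hua).elim id id), fun w hwa hwu => ?_⟩).elim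
    by_cases hwv : w = v
    · exact Or.inr (hwv ▸ hvu.symm)
    · exact Or.inl ((hcover w hwv hwa hwa).elim id id)
  · exact ⟨a, b, hab, fun h => hav.1 h.symm, fun h => hav.2 h.symm, hcover⟩

lemma Preconnected.exists_isDominatingPair_of_isClique_compl [Nonempty V] (hG : G.Preconnected)
    {s : Set V} (hs : G.IsClique s) (hsc : G.IsClique sᶜ) : ∃ a b, G.IsDominatingPair a b := by
  have hside : ∀ u w, (u ∈ s ↔ w ∈ s) → u ≠ w → G.Adj u w := by
    intro u w huw hne
    by_cases hu : u ∈ s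
    · exact hs hu (huw.mp hu) hne
    · exact hsc hu (mt huw.mpr hu) hne
  obtain ⟨a⟩ := ‹Nonempty V›
  by_cases hsame : ∀ w, w ∈ s ↔ a ∈ s
  · exact ⟨a, a, Or.inl rfl, fun w hwa _ => Or.inl (hside a w (hsame w).symm hwa.symm)⟩
  obtain ⟨b, hb⟩ := not_forall.mp hsame
  obtain ⟨d, -, hd₁ : d.fst ∈ s ↔ a ∈ s, hd₂ : ¬ (d.snd ∈ s ↔ a ∈ s)⟩ :=
    (hG a b).some.exists_boundary_dart {w | w ∈ s ↔ a ∈ s} Iff.rfl hb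
  refine ⟨d.fst, d.snd, Or.inr d.adj, fun w hw₁ hw₂ => ?_⟩
  by_cases hw : w ∈ s ↔ d.fst ∈ s
  · exact Or.inl (hside _ _ hw.symm hw₁.symm)
  · refine Or.inr (hside _ _ ?_ hw₂.symm)
    tauto

lemma IsDominatingEdgeAvoiding.notMem_of_isClique {W : Set V} {v a b : V} (hW : G.IsClique W)
    (hv : v ∈ W) (h : G.IsDominatingEdgeAvoiding v a b) : a ∉ W ∧ b ∉ W :=
  ⟨fun ha => h.not_adj_left (hW hv ha h.left_ne.symm),
    fun hb => h.not_adj_right (hW hv hb h.right_ne.symm)⟩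

section CliqueComplement

variable [Fintype V] [DecidableEq V]

lemma four_le_card (hG : G.Connected) (hvc : ∀ v, ∃ a b, G.IsDominatingEdgeAvoiding v a b) :
    4 ≤ Fintype.card V := by
  obtain ⟨v⟩ := hG.nonempty
  obtain ⟨a, b, h⟩ := hvc v
  have : Nontrivial V := ⟨⟨a, v, h.left_ne⟩⟩
  obtain ⟨u, hvu⟩ := hG.preconnected.exists_adj_of_nontrivial v
  have hua : u ≠ a := by
    rintro rfl
    exact h.not_adj_left hvu
  have hub : u ≠ b := by
    rintro rfl
    exact h.not_adj_right hvu
  calc 4 = ({v, a, b, u} : Finset V).card :=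
        (Finset.card_eq_four.mpr ⟨v, a, b, u, h.left_ne.symm, h.right_ne.symm, hvu.ne,
          h.adj.ne, hua.symm, hub.symm, rfl⟩).symm
    _ ≤ _ := Finset.card_le_univ _

lemma nonempty_of_card_compl_le_three (hG : G.Connected)
    (hvc : ∀ v, ∃ a b, G.IsDominatingEdgeAvoiding v a b) {W : Finset V} (hW : Wᶜ.card ≤ 3) :
    W.Nonempty := by
  rw [Finset.nonempty_iff_ne_empty]
  rintro rfl
  have := four_le_card hG hvc
  rw [Finset.compl_empty, Finset.card_univ] at hW
  omega

lemma three_le_card_compl_of_isClique (hG : G.Connected)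
    (hdom : ∀ a b, ¬ G.IsDominatingPair a b)
    (hvc : ∀ v, ∃ a b, G.IsDominatingEdgeAvoiding v a b) {W : Finset V}
    (hW : G.IsClique (W : Set V)) : 3 ≤ Wᶜ.card := by
  by_contra! hlt
  obtain ⟨v, hv⟩ := nonempty_of_card_compl_le_three hG hvc (W := W) (by omega)
  obtain ⟨a, b, h⟩ := hvc v
  obtain ⟨ha, hb⟩ : a ∉ W ∧ b ∉ W := h.notMem_of_isClique hW hv
  have hWc : ({a, b} : Finset V) = Wᶜ := Finset.eq_of_subset_of_card_le
    (by simp [Finset.insert_subset_iff, ha, hb]) (by rw [Finset.card_pair h.adj.ne]; omega)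
  have : Nonempty V := ⟨v⟩
  obtain ⟨c, d, hcd⟩ := hG.preconnected.exists_isDominatingPair_of_isClique_compl hW
    (by rw [← Finset.coe_compl, ← hWc, Finset.coe_pair]
        exact isClique_pair.mpr fun _ => h.adj)
  exact hdom c d hcd

lemma exists_path_of_card_compl_eq_three (hG : G.Connected)
    (hdom : ∀ a b, ¬ G.IsDominatingPair a b) (hvc : ∀ v, ∃ a b, G.IsDominatingEdgeAvoiding v a b)
    {W : Finset V} (hW : G.IsClique (W : Set V)) (h3 : Wᶜ.card = 3) :
    ∃ x y z, (∀ u, u ∉ W ↔ u = x ∨ u = y ∨ u = z) ∧ x ≠ z ∧ G.Adj x y ∧ G.Adj y z ∧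
      ¬ G.Adj x z := by
  obtain ⟨v, hv⟩ := nonempty_of_card_compl_le_three hG hvc (W := W) h3.le
  obtain ⟨a, b, h⟩ := hvc v
  obtain ⟨ha, hb⟩ : a ∉ W ∧ b ∉ W := h.notMem_of_isClique hW hv
  obtain ⟨c, hc, hcab⟩ := Finset.exists_mem_notMem_of_card_lt_card
    (s := {a, b}) (t := Wᶜ) (by rw [h3]; exact Finset.card_le_two.trans_lt (by norm_num))
  have hca : c ≠ a := by simp_all
  have hcb : c ≠ b := by simp_all
  have hc : c ∉ W := Finset.mem_compl.mp hc
  have hS : ∀ u, u ∉ W ↔ u = a ∨ u = b ∨ u = c := by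
    have : ({a, b, c} : Finset V) = Wᶜ := Finset.eq_of_subset_of_card_le
      (by simp [Finset.insert_subset_iff, ha, hb, hc])
      (by rw [h3, Finset.card_eq_three.mpr ⟨a, b, c, h.adj.ne, hca.symm, hcb.symm, rfl⟩])
    intro u
    rw [← Finset.mem_compl, ← this]
    simp
  have hnot : ¬ (G.Adj a c ∧ G.Adj b c) := by
    rintro ⟨hac, hbc⟩
    have hab := h.adj
    have : Nonempty V := ⟨v⟩
    have hSc : G.IsClique (W : Set V)ᶜ := by
      intro u hu w hw huw
      simp only [Set.mem_compl_iff, Finset.mem_coe, hS] at hu hw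
      rcases hu with rfl | rfl | rfl <;> rcases hw with rfl | rfl | rfl <;>
        first | exact absurd rfl huw | assumption | exact G.adj_symm ‹_›
    obtain ⟨d, e, hde⟩ := hG.preconnected.exists_isDominatingPair_of_isClique_compl hW hSc
    exact hdom d e hde
  rcases h.adj_or_adj c (ne_of_mem_of_not_mem hv hc).symm hca hcb with hac | hbc
  · exact ⟨b, a, c, fun u => (hS u).trans (by tauto), hcb.symm, h.adj.symm, hac,
      fun hbc => hnot ⟨hac, hbc⟩⟩
  · exact ⟨a, b, c, hS, hca.symm, h.adj, hbc, fun hac => hnot ⟨hac, hbc⟩⟩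

end CliqueComplement

lemma nonempty_iso_cycleGraph_five {f : Fin 5 → V} (hf : Function.Surjective f)
    (hadj : ∀ i, G.Adj (f i) (f (i + 1))) (hnadj : ∀ i, ¬ G.Adj (f i) (f (i + 2))) :
    Nonempty (G ≃g cycleGraph 5) := by
  have hiff : ∀ i j, G.Adj (f i) (f j) ↔ (cycleGraph 5).Adj i j := by
    intro i j
    fin_cases i <;> fin_cases j <;>
      first
        | exact iff_of_false (G.irrefl) (by decide)
        | exact iff_of_true (hadj _) (by decide)
        | exact iff_of_true (G.adj_symm (hadj _)) (by decide)
        | exact iff_of_false (hnadj _) (by decide)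
        | exact iff_of_false (fun h => have h' := G.adj_symm h; hnadj _ h') (by decide)
  have hinj : Function.Injective f := by
    have key : ∀ i j : Fin 5,
        (∀ k, (cycleGraph 5).Adj i k ↔ (cycleGraph 5).Adj j k) → i = j := by
      decide
    exact fun i j hij => key i j fun k => by rw [← hiff, ← hiff, hij]
  exact ⟨(⟨Equiv.ofBijective f ⟨hinj, hf⟩, hiff _ _⟩ : cycleGraph 5 ≃g G).symm⟩

section PathOutsideClique

variable {W : Set V} {x y z : V}

lemma not_adj_of_mem_of_path (hdom : ∀ a b, ¬ G.IsDominatingPair a b) (hW : G.IsClique W)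
    (hS : ∀ u, u ∉ W ↔ u = x ∨ u = y ∨ u = z) (hxy : G.Adj x y) (hyz : G.Adj y z) {w : V}
    (hw : w ∈ W) : ¬ G.Adj y w := by
  refine fun hyw => hdom y w ⟨Or.inr hyw, fun u huy huw => ?_⟩
  by_cases hu : u ∈ W
  · exact Or.inr (hW hw hu huw.symm)
  rcases (hS u).mp hu with rfl | rfl | rfl
  · exact Or.inl hxy.symm
  · exact absurd rfl huy
  · exact Or.inl hyz

lemma not_adj_of_adj_of_mem_of_path (hdom : ∀ a b, ¬ G.IsDominatingPair a b)
    (hW : G.IsClique W) (hS : ∀ u, u ∉ W ↔ u = x ∨ u = y ∨ u = z) (hxy : G.Adj x y) {w : V}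
    (hw : w ∈ W) (hxw : G.Adj x w) : ¬ G.Adj z w := by
  refine fun hzw => hdom w x ⟨Or.inr hxw.symm, fun u huw hux => ?_⟩
  by_cases hu : u ∈ W
  · exact Or.inl (hW hw hu huw.symm)
  rcases (hS u).mp hu with rfl | rfl | rfl
  · exact absurd rfl hux
  · exact Or.inr hxy
  · exact Or.inl hzw.symm

lemma eq_of_adj_of_notMem_of_path (hdom : ∀ a b, ¬ G.IsDominatingPair a b)
    (hW : G.IsClique W) (hS : ∀ u, u ∉ W ↔ u = x ∨ u = y ∨ u = z) (hxy : G.Adj x y)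
    (hyz : G.Adj y z) {p u : V} (hp : p ∈ W) (hxp : G.Adj x p) (hu : u ∉ W) (hpu : G.Adj p u) :
    u = x := by
  rcases (hS u).mp hu with rfl | rfl | rfl
  · rfl
  · exact absurd hpu.symm (not_adj_of_mem_of_path hdom hW hS hxy hyz hp)
  · exact absurd hpu.symm (not_adj_of_adj_of_mem_of_path hdom hW hS hxy hp hxp)

lemma eq_or_eq_of_mem_of_path (hdom : ∀ a b, ¬ G.IsDominatingPair a b)
    (hvc : ∀ v, ∃ a b, G.IsDominatingEdgeAvoiding v a b) (hW : G.IsClique W)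
    (hS : ∀ u, u ∉ W ↔ u = x ∨ u = y ∨ u = z) (hxz : x ≠ z) (hxy : G.Adj x y)
    (hyz : G.Adj y z) (hnxz : ¬ G.Adj x z) {p q : V} (hp : p ∈ W) (hq : q ∈ W)
    (hxp : G.Adj x p) (hzq : G.Adj z q) {v : V} (hv : v ∈ W) : v = p ∨ v = q := by
  have hS' : ∀ u, u ∉ W ↔ u = z ∨ u = y ∨ u = x := fun u => (hS u).trans (by tauto)
  by_contra! hvpq
  obtain ⟨c, d, h⟩ := hvc v
  obtain ⟨hc, hd⟩ := h.notMem_of_isClique hW hv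
  -- the edge `cd` avoiding `v` has to dominate both `p` and `q`
  have hcdx : c = x ∨ d = x := by
    rcases h.adj_or_adj p hvpq.1.symm (ne_of_mem_of_not_mem hp hc)
      (ne_of_mem_of_not_mem hp hd) with hcp | hdp
    · exact Or.inl (eq_of_adj_of_notMem_of_path hdom hW hS hxy hyz hp hxp hc hcp.symm)
    · exact Or.inr (eq_of_adj_of_notMem_of_path hdom hW hS hxy hyz hp hxp hd hdp.symm)
  have hcdz : c = z ∨ d = z := by
    rcases h.adj_or_adj q hvpq.2.symm (ne_of_mem_of_not_mem hq hc)
      (ne_of_mem_of_not_mem hq hd) with hcq | hdq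
    · exact Or.inl
        (eq_of_adj_of_notMem_of_path hdom hW hS' hyz.symm hxy.symm hq hzq hc hcq.symm)
    · exact Or.inr
        (eq_of_adj_of_notMem_of_path hdom hW hS' hyz.symm hxy.symm hq hzq hd hdq.symm)
  have hcd := h.adj
  rcases hcdx with rfl | rfl <;> rcases hcdz with rfl | rfl <;>
    first | exact hxz rfl | exact hnxz hcd | exact hnxz hcd.symm

lemma nonempty_iso_cycleGraph_five_of_path (hdom : ∀ a b, ¬ G.IsDominatingPair a b)
    (hvc : ∀ v, ∃ a b, G.IsDominatingEdgeAvoiding v a b) (hW : G.IsClique W)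
    (hS : ∀ u, u ∉ W ↔ u = x ∨ u = y ∨ u = z) (hxz : x ≠ z) (hxy : G.Adj x y)
    (hyz : G.Adj y z) (hnxz : ¬ G.Adj x z) : Nonempty (G ≃g cycleGraph 5) := by
  have hS' : ∀ u, u ∉ W ↔ u = z ∨ u = y ∨ u = x := fun u => (hS u).trans (by tauto)
  have hx : x ∉ W := (hS x).mpr (Or.inl rfl)
  have hz : z ∉ W := (hS z).mpr (Or.inr (Or.inr rfl))
  obtain ⟨a, b, h⟩ := hvc y
  have hmem : ∀ u, u ≠ y → ¬ G.Adj y u → u ∈ W := by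
    intro u huy hyu
    by_contra hu
    rcases (hS u).mp hu with rfl | rfl | rfl
    · exact hyu hxy.symm
    · exact huy rfl
    · exact hyu hyz
  have ha := hmem a h.left_ne h.not_adj_left
  have hb := hmem b h.right_ne h.not_adj_right
  obtain ⟨p, hp, hxp⟩ : ∃ p ∈ W, G.Adj x p := by
    rcases h.adj_or_adj x hxy.ne (ne_of_mem_of_not_mem ha hx).symm
      (ne_of_mem_of_not_mem hb hx).symm with hax | hbx
    exacts [⟨a, ha, hax.symm⟩, ⟨b, hb, hbx.symm⟩]
  obtain ⟨q, hq, hzq⟩ : ∃ q ∈ W, G.Adj z q := by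
    rcases h.adj_or_adj z hyz.ne' (ne_of_mem_of_not_mem ha hz).symm
      (ne_of_mem_of_not_mem hb hz).symm with haz | hbz
    exacts [⟨a, ha, haz.symm⟩, ⟨b, hb, hbz.symm⟩]
  have hnzp := not_adj_of_adj_of_mem_of_path hdom hW hS hxy hp hxp
  have hnxq := not_adj_of_adj_of_mem_of_path hdom hW hS' hyz.symm hq hzq
  have hpq : p ≠ q := by
    rintro rfl
    exact hnzp hzq
  have hsurj : Function.Surjective ![x, y, z, q, p] := by
    intro v
    by_cases hv : v ∈ W
    · rcases eq_or_eq_of_mem_of_path hdom hvc hW hS hxz hxy hyz hnxz hp hq hxp hzq hv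
        with rfl | rfl
      exacts [⟨4, rfl⟩, ⟨3, rfl⟩]
    · rcases (hS v).mp hv with rfl | rfl | rfl
      exacts [⟨0, rfl⟩, ⟨1, rfl⟩, ⟨2, rfl⟩]
  refine nonempty_iso_cycleGraph_five hsurj (fun i => ?_) (fun i => ?_)
  · fin_cases i
    exacts [hxy, hyz, hzq, hW hq hp hpq.symm, hxp.symm]
  · fin_cases i
    exacts [hnxz, not_adj_of_mem_of_path hdom hW hS hxy hyz hq, hnzp,
      fun h => hnxq h.symm, fun h => not_adj_of_mem_of_path hdom hW hS hxy hyz hp h.symm]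

end PathOutsideClique

lemma cliqueNum_lt_of_cliqueFree [Finite V] {n : ℕ} (h : G.CliqueFree n) :
    G.cliqueNum < n := by
  obtain ⟨s, hs⟩ := G.exists_isNClique_cliqueNum
  by_contra! hn
  obtain ⟨t, hts, ht⟩ := Finset.exists_subset_card_eq (hs.card_eq ▸ hn)
  exact h t ⟨hs.isClique.subset (by simpa using hts), ht⟩

lemma cycleGraph_five_cliqueFree_three : (cycleGraph 5).CliqueFree 3 := by
  intro t ht
  obtain ⟨a, b, c, hab, hac, hbc, -⟩ := is3Clique_iff.mp ht
  revert a b c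
  decide

lemma cliqueNum_eq_two_of_iso [Finite V] (e : G ≃g cycleGraph 5) : G.cliqueNum = 2 := by
  classical
  refine Nat.le_antisymm (Nat.lt_succ_iff.mp
    (cliqueNum_lt_of_cliqueFree (cycleGraph_five_cliqueFree_three.comap e.isContained))) ?_
  have h01 : G.Adj (e.symm 0) (e.symm 1) := e.symm.map_adj_iff.mpr (by decide)
  calc 2 = ({e.symm 0, e.symm 1} : Finset V).card := (Finset.card_pair h01.ne).symm
    _ ≤ G.cliqueNum := IsClique.card_le_cliqueNum
        (tc := by rw [Finset.coe_pair]; exact isClique_pair.mpr fun _ => h01)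

end SimpleGraph

open SimpleGraph

lemma omegaNum_eq_cliqueNum [Fintype V] (G : SimpleGraph V) : omegaNum G = G.cliqueNum := by
  simp only [omegaNum, cliqueNum, isNClique_iff, and_comm]

/-- a maximal `3`-`γc`-vertex critical graph of order `n` satisfies
`ω(G) ≤ n - 3`, with equality if and only if `G` is isomorphic to the cycle `C₅`. -/
theorem stmt_10 (G : SimpleGraph V) [Fintype V] [DecidableEq V]
    (h : MaximalVertexCritical3 G) :
    omegaNum G ≤ Fintype.card V - 3 ∧
      (omegaNum G = Fintype.card V - 3 ↔
        Nonempty (G ≃g SimpleGraph.cycleGraph 5)) := by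
  obtain ⟨-, hκ, hγ, hγv⟩ := h
  have hG : G.Connected := connected_of_pos_kappa (by omega)
  have hdom : ∀ a b, ¬ G.IsDominatingPair a b := fun a b hab => by
    have := hab.gammaC_le_two
    omega
  have hvc : ∀ v, ∃ a b, G.IsDominatingEdgeAvoiding v a b := fun v =>
    exists_isDominatingEdgeAvoiding hG hdom (connected_induce_ne_of_one_lt_kappa hκ v) (hγv v)
  obtain ⟨W, hW⟩ := G.exists_isNClique_cliqueNum
  have hcompl := W.card_compl
  have h3 := three_le_card_compl_of_isClique hG hdom hvc hW.isClique
  rw [omegaNum_eq_cliqueNum, ← hW.card_eq]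
  refine ⟨by omega, fun heq => ?_, fun ⟨e⟩ => ?_⟩
  · obtain ⟨x, y, z, hS, hxz, hxy, hyz, hnxz⟩ :=
      exists_path_of_card_compl_eq_three hG hdom hvc hW.isClique (by omega)
    exact nonempty_iso_cycleGraph_five_of_path hdom hvc hW.isClique hS hxz hxy hyz hnxz
  · rw [hW.card_eq, cliqueNum_eq_two_of_iso e, Fintype.card_congr e.toEquiv, Fintype.card_fin]
end

section
/- Let G be a maximal 3-γc-vertex critical graph with α(G) = κ(G) ≥ 4, let S be a minimum cut set of G, and suppose every connected component of G − S has more than one vertex. Then for every maximum independent set I of G, the number of vertices of I lying outside S is at least 3, i.e., |I \ S| ≥ 3. -/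
open Finset

variable {V : Type*}

/-!
Suppose `|I \ S| ≤ 2`. Since `|I| = |S|`, also `|S \ I| ≤ 2`, so most of `S` lies in the
independent set `I`. Criticality supplies small dominating structures: adding a missing edge `uv`
creates a dominating vertex or edge, which has to use `u` or `v`, and deleting a vertex `w`
leaves a dominating edge that misses `w`. An edge inside one component of `G - S` cannot dominate
all but one vertex, since every other component has at least two vertices; so these edges meet
`S`, where the independence of `I ∩ S` restricts them.

If `S \ I ⊆ {σ}` and `i ∈ I \ S`, the dominating edge of `G - σ` has an end `b ≠ i` in the
component of `i`, and `b` misses `σ`. Adding edges at `σ` then shows that `σ` sees a vertex `c` of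
another component, and adding the edge `ic` is impossible. So `I ⊆ S`, whence `I = S`, which is
not independent. If `S \ I = {σ, τ}` and `I \ S = {i₁, i₂}`, adding `i₁i₂` makes, say, `{i₁, σ}`
dominate every vertex but `i₂`. The dominating edges of `G - σ` and `G - τ` then run through `τ`
and `σ` respectively, and adding an edge from the component of `i₁` to another component, or to
`S`, gives the contradiction.
-/

namespace SimpleGraph

variable (G : SimpleGraph V)

def DominatesPair (a b : V) : Prop :=
  ∀ x, x ≠ a → x ≠ b → G.Adj a x ∨ G.Adj b x

def DominatesExcept (a b e : V) : Prop :=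
  ∀ x, x ≠ a → x ≠ b → x ≠ e → G.Adj a x ∨ G.Adj b x

def SameComponent (S : Set V) (x y : V) : Prop :=
  ∃ (hx : x ∉ S) (hy : y ∉ S), (G.induce Sᶜ).Reachable ⟨x, hx⟩ ⟨y, hy⟩

variable {G} {a b e x y z : V}

lemma DominatesPair.symm (h : G.DominatesPair a b) : G.DominatesPair b a :=
  fun x hxb hxa => (h x hxa hxb).symm

lemma DominatesExcept.symm (h : G.DominatesExcept a b e) : G.DominatesExcept b a e :=
  fun x hxb hxa hxe => (h x hxa hxb hxe).symm

lemma IsIndepSet.not_adj {I : Set V} (hI : G.IsIndepSet I) (ha : a ∈ I) (hb : b ∈ I) :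
    ¬ G.Adj a b :=
  fun h => hI ha hb h.ne h

namespace SameComponent

variable {S : Set V}

lemma refl (hx : x ∉ S) : G.SameComponent S x x := ⟨hx, hx, .rfl⟩

lemma symm (h : G.SameComponent S x y) : G.SameComponent S y x :=
  let ⟨hx, hy, hr⟩ := h; ⟨hy, hx, hr.symm⟩

lemma trans (h₁ : G.SameComponent S x y) (h₂ : G.SameComponent S y z) :
    G.SameComponent S x z :=
  let ⟨hx, _, hr₁⟩ := h₁; let ⟨_, hz, hr₂⟩ := h₂; ⟨hx, hz, hr₁.trans hr₂⟩

lemma notMem_left (h : G.SameComponent S x y) : x ∉ S := h.1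

lemma notMem_right (h : G.SameComponent S x y) : y ∉ S := h.2.1

lemma of_adj (hx : x ∉ S) (hy : y ∉ S) (h : G.Adj x y) : G.SameComponent S x y :=
  ⟨hx, hy, Adj.reachable h⟩

end SameComponent

lemma ne_of_not_sameComponent {S : Set V} (hx : x ∉ S) (h : ¬ G.SameComponent S x y) : x ≠ y :=
  fun hxy => h (hxy ▸ .refl hx)

lemma not_adj_of_not_sameComponent {S : Set V} (hx : x ∉ S) (hy : y ∉ S)
    (h : ¬ G.SameComponent S x y) : ¬ G.Adj x y :=
  fun hxy => h (.of_adj hx hy hxy)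

lemma adj_of_sup_edge_adj {u v : V} (h : (G ⊔ fromEdgeSet {s(u, v)}).Adj x y) (hyu : y ≠ u)
    (hyv : y ≠ v) : G.Adj x y := by
  rcases h with h | h
  · exact h
  · simp only [fromEdgeSet_adj, Set.mem_singleton_iff, Sym2.eq_iff] at h
    grind

end SimpleGraph

open SimpleGraph

section Criticality

variable [Fintype V] {G : SimpleGraph V} {a b u v w : V}

lemma gammaC_le_card {D : Finset V} (hD : IsConnDomSet G D) : gammaC G ≤ D.card :=
  Nat.sInf_le ⟨D, rfl, hD⟩

lemma not_dominatesPair_of_three_le_gammaC (h3 : 3 ≤ gammaC G) (hab : a = b ∨ G.Adj a b) :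
    ¬ G.DominatesPair a b := by
  classical
  intro hd
  have hD : IsConnDomSet G (({a, b} : Finset V) : Set V) := by
    refine ⟨fun x => ?_, ?_⟩
    · by_cases hx : x = a ∨ x = b
      · exact Or.inl (by simpa using hx)
      · push Not at hx
        rcases hd x hx.1 hx.2 with h | h
        · exact Or.inr ⟨a, by simp, h⟩
        · exact Or.inr ⟨b, by simp, h⟩
    · rw [Finset.coe_pair]
      rcases hab with rfl | hab
      · rw [Set.pair_eq_singleton, induce_singleton_eq_top]
        exact connected_top
      · exact induce_pair_connected_of_adj hab
  have := (gammaC_le_card hD).trans Finset.card_le_two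
  omega

/-- A connected dominating set of size at most two is a vertex or an edge. -/
lemma exists_dominatesPair_of_gammaC_lt_three (hD : ∃ D : Finset V, IsConnDomSet G D)
    (h : gammaC G < 3) :
    ∃ a b, (a = b ∨ G.Adj a b) ∧ G.DominatesPair a b := by
  classical
  obtain ⟨D, hcard, hdom, hconn⟩ :=
    Nat.sInf_mem (s := {k | ∃ D : Finset V, D.card = k ∧ IsConnDomSet G ↑D})
      (let ⟨D, hD⟩ := hD; ⟨_, D, rfl, hD⟩)
  obtain ⟨⟨a, ha⟩⟩ := hconn.nonempty
  obtain ⟨b, hab, hsub⟩ : ∃ b, (a = b ∨ G.Adj a b) ∧ D ⊆ {a, b} := by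
    by_cases hnt : ∃ c ∈ D, c ≠ a
    · obtain ⟨c, hc, hca⟩ := hnt
      have : Nontrivial (↑D : Set V) := ⟨⟨a, ha⟩, ⟨c, hc⟩, by simpa using hca.symm⟩
      obtain ⟨⟨b, hb⟩, hadj⟩ := hconn.preconnected.exists_adj_of_nontrivial ⟨a, ha⟩
      replace hadj : G.Adj a b := hadj
      refine ⟨b, Or.inr hadj, (Finset.eq_of_subset_of_card_le ?_ ?_).symm.subset⟩
      · simpa [Finset.insert_subset_iff] using ⟨ha, hb⟩
      · rw [Finset.card_pair hadj.ne]
        change D.card = gammaC G at hcard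
        omega
    · push Not at hnt
      exact ⟨a, Or.inl rfl, fun x hx => by simp [hnt x hx]⟩
  refine ⟨a, b, hab, fun x hxa hxb => ?_⟩
  obtain ⟨d, hd, hdx⟩ := (hdom x).resolve_left fun hx => by simpa [hxa, hxb] using hsub hx
  rcases Finset.mem_insert.1 (hsub hd) with rfl | hd
  · exact Or.inl hdx
  · exact Or.inr ((Finset.mem_singleton.1 hd) ▸ hdx)

lemma dominatesPair_or_of_sup_edge (h3 : 3 ≤ gammaC G)
    (hab : a = b ∨ (G ⊔ fromEdgeSet {s(u, v)}).Adj a b)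
    (hd : (G ⊔ fromEdgeSet {s(u, v)}).DominatesPair a b) (hu : a = u ∨ b = u) :
    G.DominatesPair u v ∨ ∃ y, G.Adj u y ∧ ¬ G.Adj v y ∧ G.DominatesExcept u y v := by
  wlog ha : a = u generalizing a b
  · exact this (hab.imp Eq.symm Adj.symm) hd.symm hu.symm (hu.resolve_left ha)
  subst ha
  by_cases hb : b = a ∨ b = v
  · left
    intro x hxa hxv
    have hxb : x ≠ b := by rcases hb with rfl | rfl <;> assumption
    rcases hd x hxa hxb with h | h
    · exact Or.inl (adj_of_sup_edge_adj h hxa hxv)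
    · rcases hb with rfl | rfl
      · exact Or.inl (adj_of_sup_edge_adj h hxa hxv)
      · exact Or.inr (adj_of_sup_edge_adj h hxa hxv)
  · push Not at hb
    have hab' : G.Adj a b := adj_of_sup_edge_adj (hab.resolve_left (Ne.symm hb.1)) hb.1 hb.2
    have hd' : G.DominatesExcept a b v := fun x hxa hxb hxv =>
      (hd x hxa hxb).imp (adj_of_sup_edge_adj · hxa hxv) (adj_of_sup_edge_adj · hxa hxv)
    refine Or.inr ⟨b, hab', fun hvb => not_dominatesPair_of_three_le_gammaC h3 (Or.inr hab')
      fun x hxa hxb => ?_, hd'⟩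
    by_cases hxv : x = v
    · exact Or.inr (hxv ▸ hvb.symm)
    · exact hd' x hxa hxb hxv

/-- A connected dominating set of size at most two of `G + uv` must contain `u` or `v`. -/
lemma EdgeCritical3.dominatesPair_or_dominatesExcept (h : EdgeCritical3 G) (huv : u ≠ v)
    (hna : ¬ G.Adj u v) :
    G.DominatesPair u v ∨ (∃ y, G.Adj u y ∧ ¬ G.Adj v y ∧ G.DominatesExcept u y v) ∨
      (∃ y, G.Adj v y ∧ ¬ G.Adj u y ∧ G.DominatesExcept v y u) := by
  obtain ⟨h3, hec⟩ := h
  have hc := hec u v huv hna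
  obtain ⟨-, D, -, hD⟩ := Nat.nonempty_of_pos_sInf
    (s := {k | ∃ D : Finset V, D.card = k ∧ IsConnDomSet G ↑D}) (by unfold gammaC at h3; omega)
  have hD' : IsConnDomSet (G ⊔ fromEdgeSet {s(u, v)}) D :=
    ⟨fun x => (hD.1 x).imp_right fun ⟨d, hd, h⟩ => ⟨d, hd, Or.inl h⟩,
      hD.2.mono fun _ _ h => Or.inl h⟩
  obtain ⟨a, b, hab, hd⟩ := exists_dominatesPair_of_gammaC_lt_three ⟨D, hD'⟩ hc
  by_cases hu : a = u ∨ b = u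
  · exact (dominatesPair_or_of_sup_edge h3.ge hab hd hu).imp_right Or.inl
  by_cases hv : a = v ∨ b = v
  · rw [Sym2.eq_swap] at hab hd
    rcases dominatesPair_or_of_sup_edge h3.ge hab hd hv with h | h
    · exact Or.inl h.symm
    · exact Or.inr (Or.inr h)
  push Not at hu hv
  refine absurd (fun x hxa hxb => ?_) (not_dominatesPair_of_three_le_gammaC h3.ge
    (hab.imp_right fun h => adj_of_sup_edge_adj h hu.2 hv.2))
  exact (hd x hxa hxb).imp (fun h => (adj_of_sup_edge_adj h.symm hu.1 hv.1).symm)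
    (fun h => (adj_of_sup_edge_adj h.symm hu.2 hv.2).symm)

lemma kappa_le_card {T : Finset V}
    (hT : ¬ (G.induce (↑T : Set V)ᶜ).Connected ∨ ((↑T : Set V)ᶜ).Subsingleton) :
    kappa G ≤ T.card :=
  Nat.sInf_le ⟨T, rfl, hT⟩

lemma connected_induce_ne_of_two_le_kappa (hk : 2 ≤ kappa G) (w : V) :
    (G.induce {x | x ≠ w}).Connected := by
  classical
  by_contra hw
  have hT : ((↑({w} : Finset V) : Set V)ᶜ) = {x | x ≠ w} := by ext; simp
  have := kappa_le_card (G := G) (T := {w}) (Or.inl (hT ▸ hw))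
  simp only [Finset.card_singleton] at this
  omega

lemma exists_ne_ne_of_two_le_kappa (hk : 2 ≤ kappa G) (a w : V) : ∃ x, x ≠ a ∧ x ≠ w := by
  classical
  by_contra! h
  have := kappa_le_card (G := G) (T := {a})
    (Or.inr fun x hx y hy => (h x (by simpa using hx)).trans (h y (by simpa using hy)).symm)
  simp only [Finset.card_singleton] at this
  omega

lemma exists_notMem_of_card_le_kappa {S : Finset V} (hS : S.Nonempty)
    (hSk : S.card ≤ kappa G) : ∃ x, x ∉ S := by
  classical
  by_contra! hall
  obtain ⟨v, hv⟩ := hS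
  have := kappa_le_card (G := G) (T := S.erase v) (Or.inr fun x hx y hy => by
    simp only [Finset.coe_erase, Set.mem_compl_iff, Set.mem_sdiff, Finset.mem_coe, not_and,
      not_not] at hx hy
    rw [hx (hall x), hy (hall y)])
  rw [Finset.card_erase_of_mem hv] at this
  have := Finset.card_pos.2 ⟨v, hv⟩
  omega

/-- A vertex dominating `G - w` is completed to an edge by any of its neighbours. -/
lemma VertexCritical3.exists_dominatesExcept [DecidableEq V] (h : VertexCritical3 G) (w : V) :
    ∃ a b, G.Adj a b ∧ a ≠ w ∧ b ≠ w ∧ ¬ G.Adj a w ∧ ¬ G.Adj b w ∧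
      G.DominatesExcept a b w := by
  obtain ⟨hk, h3, hvc⟩ := h
  set H := G.induce {x | x ≠ w}
  have hH : IsConnDomSet H ↑(Finset.univ : Finset ({x | x ≠ w} : Set V)) :=
    ⟨fun x => Or.inl (by simp), by
      rw [Finset.coe_univ]
      exact H.induceUnivIso.connected_iff.2 (connected_induce_ne_of_two_le_kappa hk w)⟩
  obtain ⟨⟨a, ha⟩, ⟨b, hb⟩, hab, hd⟩ := exists_dominatesPair_of_gammaC_lt_three ⟨_, hH⟩ (hvc w)
  have hd' : G.DominatesExcept a b w := fun x hxa hxb hxw =>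
    hd ⟨x, hxw⟩ (by simpa using hxa) (by simpa using hxb)
  obtain ⟨a, b, hab, haw, hbw, hd⟩ :
      ∃ a b, G.Adj a b ∧ a ≠ w ∧ b ≠ w ∧ G.DominatesExcept a b w := by
    rcases hab with hab | hab
    · obtain rfl : a = b := congrArg Subtype.val hab
      obtain ⟨c, hca, hcw⟩ := exists_ne_ne_of_two_le_kappa hk a w
      exact ⟨a, c, (hd' c hca hca hcw).elim id id, ha, hcw,
        fun x hxa _ hxw => Or.inl ((hd' x hxa hxa hxw).elim id id)⟩
    · exact ⟨a, b, hab, ha, hb, hd'⟩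
  have not_adj : ∀ c, c = a ∨ c = b → ¬ G.Adj c w := by
    rintro c hc hcw
    refine not_dominatesPair_of_three_le_gammaC h3.ge (Or.inr hab) fun x hxa hxb => ?_
    by_cases hxw : x = w
    · subst hxw
      rcases hc with rfl | rfl
      exacts [Or.inl hcw, Or.inr hcw]
    · exact hd x hxa hxb hxw
  exact ⟨a, b, hab, haw, hbw, not_adj a (.inl rfl), not_adj b (.inr rfl), hd⟩

end Criticality

/-- The consequences of maximal `3`-`γc`-vertex criticality of `G`, and the properties of a cut
set `S` of `G` leaving no isolated vertex, through which the argument uses them. -/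
structure CriticalCut (G : SimpleGraph V) (S : Set V) : Prop where
  dominatesPair_or_dominatesExcept : ∀ ⦃u v⦄, u ≠ v → ¬ G.Adj u v → G.DominatesPair u v ∨
    (∃ y, G.Adj u y ∧ ¬ G.Adj v y ∧ G.DominatesExcept u y v) ∨
    (∃ y, G.Adj v y ∧ ¬ G.Adj u y ∧ G.DominatesExcept v y u)
  exists_dominatesExcept : ∀ w, ∃ a b, G.Adj a b ∧ a ≠ w ∧ b ≠ w ∧ ¬ G.Adj a w ∧ ¬ G.Adj b w ∧
    G.DominatesExcept a b w
  not_preconnected : ¬ (G.induce Sᶜ).Preconnected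
  exists_adj : ∀ v, v ∉ S → ∃ u, u ∉ S ∧ G.Adj u v

lemma MaximalVertexCritical3.criticalCut [Fintype V] [DecidableEq V] {G : SimpleGraph V}
    (h : MaximalVertexCritical3 G) {S : Set V} (hS : ¬ (G.induce Sᶜ).Connected)
    (hout : ∃ x, x ∉ S) (hcomp : ∀ v, v ∉ S → ∃ u, u ∉ S ∧ G.Adj u v) : CriticalCut G S where
  dominatesPair_or_dominatesExcept _ _ := h.1.dominatesPair_or_dominatesExcept
  exists_dominatesExcept := h.2.exists_dominatesExcept
  not_preconnected hp := hS ((connected_iff _).2 ⟨hp, let ⟨x, hx⟩ := hout; ⟨⟨x, hx⟩⟩⟩)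
  exists_adj := hcomp

namespace CriticalCut

variable {G : SimpleGraph V} {S I : Set V} {a b c c' e i i₁ i₂ x z σ τ : V}

lemma exists_notMem (hG : CriticalCut G S) : ∃ x, x ∉ S := by
  by_contra! h
  exact hG.not_preconnected fun x => absurd (h x) x.2

lemma exists_not_sameComponent (hG : CriticalCut G S) (a w : V) :
    ∃ y, y ∉ S ∧ ¬ G.SameComponent S a y ∧ y ≠ w := by
  obtain ⟨x, y, hxy⟩ : ∃ x y : ↥Sᶜ, ¬ (G.induce Sᶜ).Reachable x y := by
    by_contra! h
    exact hG.not_preconnected h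
  obtain ⟨c, hc, hac⟩ : ∃ c, c ∉ S ∧ ¬ G.SameComponent S a c := by
    by_cases hax : G.SameComponent S a x
    · exact ⟨y, y.2, fun hay => hxy (hax.symm.trans hay).2.2⟩
    · exact ⟨x, x.2, hax⟩
  by_cases hcw : c = w
  · obtain ⟨d, hd, hdc⟩ := hG.exists_adj c hc
    exact ⟨d, hd, fun had => hac (had.trans (.of_adj hd hc hdc)), hcw ▸ hdc.ne⟩
  · exact ⟨c, hc, hac, hcw⟩

/-- Every other component of `G - S` has a vertex other than `e` that `a` and `b` miss. -/
lemma not_dominatesExcept (hG : CriticalCut G S) (hab : G.SameComponent S a b) (e : V) :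
    ¬ G.DominatesExcept a b e := by
  intro hd
  obtain ⟨y, hy, hay, hye⟩ := hG.exists_not_sameComponent a e
  have hby : ¬ G.SameComponent S b y := fun h => hay (hab.trans h)
  exact (hd y (ne_of_not_sameComponent hab.notMem_left hay).symm
    (ne_of_not_sameComponent hab.notMem_right hby).symm hye).elim
    (not_adj_of_not_sameComponent hab.notMem_left hy hay)
    (not_adj_of_not_sameComponent hab.notMem_right hy hby)

lemma mem_of_dominatesExcept (hG : CriticalCut G S) (ha : a ∉ S) (hab : G.Adj a b)
    (hd : G.DominatesExcept a b e) : b ∈ S := by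
  by_contra hb
  exact hG.not_dominatesExcept (.of_adj ha hb hab) e hd

lemma exists_mem_dominatesExcept (hG : CriticalCut G S) (w : V) :
    ∃ a b, a ∈ S ∧ G.Adj a b ∧ a ≠ w ∧ b ≠ w ∧ ¬ G.Adj a w ∧ ¬ G.Adj b w ∧
      G.DominatesExcept a b w := by
  obtain ⟨a, b, hab, haw, hbw, hna, hnb, hd⟩ := hG.exists_dominatesExcept w
  by_cases ha : a ∈ S
  · exact ⟨a, b, ha, hab, haw, hbw, hna, hnb, hd⟩
  · exact ⟨b, a, hG.mem_of_dominatesExcept ha hab hd, hab.symm, hbw, haw, hnb, hna, hd.symm⟩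

lemma exists_mem_not_adj (hG : CriticalCut G S) (w : V) : ∃ s ∈ S, s ≠ w ∧ ¬ G.Adj s w :=
  let ⟨a, _, ha, _, haw, _, hna, _⟩ := hG.exists_mem_dominatesExcept w
  ⟨a, ha, haw, hna⟩

lemma not_isIndepSet (hG : CriticalCut G S) : ¬ G.IsIndepSet S := by
  intro hS
  obtain ⟨c, hc⟩ := hG.exists_notMem
  obtain ⟨a, b, haS, hab, -, -, -, -, hd⟩ := hG.exists_mem_dominatesExcept c
  have hbS : b ∉ S := fun hbS => hS.not_adj haS hbS hab
  have hb : ∀ s ∈ S, G.Adj b s := by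
    intro s hs
    by_cases hsa : s = a
    · exact hsa ▸ hab.symm
    · exact (hd s hsa (ne_of_mem_of_not_mem hs hbS) (ne_of_mem_of_not_mem hs hc)).resolve_left
        (hS.not_adj haS hs)
  obtain ⟨s, hs, -, hsb⟩ := hG.exists_mem_not_adj b
  exact hsb (hb s hs).symm

section OneMissing

variable (hG : CriticalCut G S) (hI : G.IsIndepSet I) (hσS : σ ∈ S)
  (hSI : ∀ s ∈ S, s ≠ σ → s ∈ I) (hi : i ∈ I) (hiS : i ∉ S)
include hG hI hσS hSI hi hiS

lemma exists_sameComponent_not_adj : ∃ b, G.SameComponent S b i ∧ b ≠ i ∧ ¬ G.Adj b σ := by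
  obtain ⟨a, b, haS, hab, haσ, hbσ, -, hnb, hd⟩ := hG.exists_mem_dominatesExcept σ
  have haI := hSI a haS haσ
  have hbI : b ∉ I := fun hb => hI.not_adj haI hb hab
  have hbS : b ∉ S := fun hb => hbI (hSI b hb hbσ)
  have hbi : G.Adj b i := (hd i (ne_of_mem_of_not_mem haS hiS).symm (ne_of_mem_of_not_mem hi hbI)
    (ne_of_mem_of_not_mem hσS hiS).symm).resolve_left (hI.not_adj haI hi)
  exact ⟨b, .of_adj hbS hiS hbi, hbi.ne, hnb⟩

lemma adj_or_adj_of_not_sameComponent (hc : c ∉ S) (hc' : c' ∉ S)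
    (hci : ¬ G.SameComponent S c i) (hc'i : ¬ G.SameComponent S c' i) (hcc' : c ≠ c') :
    G.Adj σ c ∨ G.Adj σ c' := by
  by_contra! ⟨hσc, hσc'⟩
  obtain ⟨b, hbi, hbi', hbσ⟩ := exists_sameComponent_not_adj hG hI hσS hSI hi hiS
  have hbS := hbi.notMem_left
  have hbc : b ≠ c := fun h => hci (h ▸ hbi)
  have hcb : ¬ G.Adj c b := fun h => hci ((SameComponent.of_adj hc hbS h).trans hbi)
  rcases hG.dominatesPair_or_dominatesExcept (ne_of_mem_of_not_mem hσS hc) hσc with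
    hd | ⟨y, hσy, hcy, hd⟩ | ⟨y, hcy, hσy, hd⟩
  · exact (hd b (ne_of_mem_of_not_mem hσS hbS).symm hbc).elim (hbσ ·.symm) hcb
  · have hyb : G.Adj y b :=
      (hd b (ne_of_mem_of_not_mem hσS hbS).symm (fun h => hbσ (h ▸ hσy.symm)) hbc).resolve_left
        (hbσ ·.symm)
    have hyc' : G.Adj y c' := (hd c' (ne_of_mem_of_not_mem hσS hc').symm
      (fun h => hσc' (h ▸ hσy)) hcc'.symm).resolve_left hσc'
    by_cases hyS : y ∈ S
    · obtain ⟨s, hsS, hsσ, hsn⟩ := hG.exists_mem_not_adj σ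
      have hyI := hSI y hyS hσy.ne.symm
      exact (hd s hsσ (fun h => hsn (h ▸ hσy.symm)) (ne_of_mem_of_not_mem hsS hc)).elim
        (hsn ·.symm) (hI.not_adj hyI (hSI s hsS hsσ))
    · exact hc'i (((SameComponent.of_adj hyS hbS hyb).symm.trans
        (.of_adj hyS hc' hyc')).symm.trans hbi)
  · have hyS := hG.mem_of_dominatesExcept hc hcy hd
    have hyi : G.Adj y i := (hd i (ne_of_not_sameComponent hiS fun h => hci h.symm)
      (ne_of_mem_of_not_mem hyS hiS).symm (ne_of_mem_of_not_mem hσS hiS).symm).resolve_left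
      (not_adj_of_not_sameComponent hc hiS hci)
    exact hI.not_adj (hSI y hyS fun h => hσc (h ▸ hcy).symm) hi hyi

lemma exists_adj_not_sameComponent : ∃ c, c ∉ S ∧ ¬ G.SameComponent S c i ∧ G.Adj σ c := by
  obtain ⟨c, hc, hic, -⟩ := hG.exists_not_sameComponent i i
  obtain ⟨c', hc', hc'c⟩ := hG.exists_adj c hc
  have hci : ¬ G.SameComponent S c i := fun h => hic h.symm
  have hc'i : ¬ G.SameComponent S c' i := fun h =>
    hci ((SameComponent.of_adj hc' hc hc'c).symm.trans h)
  rcases adj_or_adj_of_not_sameComponent hG hI hσS hSI hi hiS hc hc' hci hc'i hc'c.ne.symm with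
    h | h
  exacts [⟨c, hc, hci, h⟩, ⟨c', hc', hc'i, h⟩]

end OneMissing

theorem subset_of_forall_mem_ne (hG : CriticalCut G S) (hI : G.IsIndepSet I)
    (hSI : ∀ s ∈ S, s ≠ σ → s ∈ I) : I ⊆ S := by
  intro i hi
  by_contra hiS
  by_cases hσS : σ ∉ S
  · exact hG.not_isIndepSet (hI.mono fun s hs => hSI s hs (ne_of_mem_of_not_mem hs hσS))
  push Not at hσS
  obtain ⟨c, hc, hci, hσc⟩ := exists_adj_not_sameComponent hG hI hσS hSI hi hiS
  obtain ⟨s, hsS, hsc, hsn⟩ := hG.exists_mem_not_adj c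
  have hsI := hSI s hsS fun h => hsn (h ▸ hσc)
  have hic := not_adj_of_not_sameComponent hiS hc fun h => hci h.symm
  rcases hG.dominatesPair_or_dominatesExcept (ne_of_not_sameComponent hiS fun h => hci h.symm)
    hic with hd | ⟨y, hiy, hcy, hd⟩ | ⟨y, hcy, hiy, hd⟩
  · exact (hd s (ne_of_mem_of_not_mem hsS hiS) hsc).elim (hI.not_adj hi hsI) (hsn ·.symm)
  · have hyS := hG.mem_of_dominatesExcept hiS hiy hd
    have hyσ : y = σ := by
      by_contra hyσ
      exact hI.not_adj hi (hSI y hyS hyσ) hiy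
    exact hcy (hyσ ▸ hσc.symm)
  · have hyS := hG.mem_of_dominatesExcept hc hcy hd
    by_cases hyσ : y = σ
    · subst hyσ
      obtain ⟨b, hbi, hbi', hbσ⟩ := exists_sameComponent_not_adj hG hI hσS hSI hi hiS
      have hbc : ¬ G.SameComponent S b c := fun h => hci (h.symm.trans hbi)
      exact (hd b (ne_of_not_sameComponent hbi.notMem_left hbc)
        (ne_of_mem_of_not_mem hσS hbi.notMem_left).symm hbi').elim
        (not_adj_of_not_sameComponent hc hbi.notMem_left fun h => hbc h.symm) (hbσ ·.symm)
    · exact (hd s hsc (fun h => hsn (h ▸ hcy.symm)) (ne_of_mem_of_not_mem hsS hiS)).elim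
        (hsn ·.symm) (hI.not_adj (hSI y hyS hyσ) hsI)

lemma adj_of_sameComponent_of_dominatesExcept (hG : CriticalCut G S) (hI : G.IsIndepSet I)
    (hσS : σ ∈ S)    (hSI : ∀ s ∈ S, s ∉ I → s = σ ∨ s = τ) (hi₁ : i₁ ∈ I) (hi₁S : i₁ ∉ S)
    (hd : G.DominatesExcept i₁ σ i₂) (hτ₁ : G.Adj i₁ τ)
    (hτ : ∀ x, x ∉ S → ¬ G.SameComponent S x i₁ → G.Adj τ x)
    (hz : G.SameComponent S z i₁) (hz₁ : z ≠ i₁) : G.Adj σ z := by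
  by_contra hσz
  obtain ⟨c, hc, hi₁c, hci₂⟩ := hG.exists_not_sameComponent i₁ i₂
  have hci₁ : ¬ G.SameComponent S c i₁ := fun h => hi₁c h.symm
  have hi₁c' : ¬ G.Adj i₁ c := not_adj_of_not_sameComponent hi₁S hc hi₁c
  have hσc : G.Adj σ c := (hd c (ne_of_not_sameComponent hc hci₁)
    (ne_of_mem_of_not_mem hσS hc).symm hci₂).resolve_left hi₁c'
  have hτc : G.Adj τ c := hτ c hc hci₁
  obtain ⟨j, hjS, hjc, hjn⟩ := hG.exists_mem_not_adj c
  have hjI : j ∈ I := by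
    by_contra hjI
    rcases hSI j hjS hjI with rfl | rfl
    exacts [hjn hσc, hjn hτc]
  rcases hG.dominatesPair_or_dominatesExcept (ne_of_not_sameComponent hi₁S hi₁c) hi₁c' with
    hd' | ⟨y, hi₁y, hcy, hd'⟩ | ⟨y, hcy, hi₁y, hd'⟩
  · exact (hd' j (ne_of_mem_of_not_mem hjS hi₁S) hjc).elim (hI.not_adj hi₁ hjI) (hjn ·.symm)
  · have hyS := hG.mem_of_dominatesExcept hi₁S hi₁y hd'
    rcases hSI y hyS (fun hyI => hI.not_adj hi₁ hyI hi₁y) with rfl | rfl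
    exacts [hcy hσc.symm, hcy hτc.symm]
  · have hyS := hG.mem_of_dominatesExcept hc hcy hd'
    by_cases hyI : y ∈ I
    · exact (hd' j hjc (fun h => hjn (h ▸ hcy.symm)) (ne_of_mem_of_not_mem hjS hi₁S)).elim
        (hjn ·.symm) (hI.not_adj hyI hjI)
    rcases hSI y hyS hyI with rfl | rfl
    · have hzc : ¬ G.SameComponent S z c := fun h => hci₁ (h.symm.trans hz)
      exact (hd' z (ne_of_not_sameComponent hz.notMem_left hzc)
        (ne_of_mem_of_not_mem hyS hz.notMem_left).symm hz₁).elim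
        (not_adj_of_not_sameComponent hc hz.notMem_left fun h => hzc h.symm) hσz
    · exact hi₁y hτ₁

lemma adj_of_sameComponent_of_forall_adj (hG : CriticalCut G S) (hτS : τ ∈ S)
    (hSI : ∀ s ∈ S, s ∉ I → s = σ ∨ s = τ) (hτI : ∀ t ∈ S, t ∈ I → G.Adj τ t)
    (hτ : ∀ x, x ∉ S → ¬ G.SameComponent S x i₂ → G.Adj τ x)
    (h12 : ¬ G.SameComponent S i₁ i₂) (hx : G.SameComponent S x i₁) : G.Adj σ x := by
  obtain ⟨a, z, haS, haz, haτ, hzτ, hnaτ, hnzτ, hd⟩ := hG.exists_mem_dominatesExcept τ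
  have eq_σ : ∀ s ∈ S, s ≠ τ → ¬ G.Adj s τ → s = σ := fun s hs hsτ hn =>
    (hSI s hs fun hsI => hn (hτI s hs hsI).symm).resolve_right hsτ
  obtain rfl := eq_σ a haS haτ hnaτ
  have hzS : z ∉ S := fun hzS => haz.ne (eq_σ z hzS hzτ hnzτ).symm
  have hz₂ : G.SameComponent S z i₂ := by
    by_contra h
    exact hnzτ (hτ z hzS h).symm
  exact (hd x (ne_of_mem_of_not_mem haS hx.notMem_left).symm
    (fun h => h12 (hx.symm.trans (h ▸ hz₂)))
    (ne_of_mem_of_not_mem hτS hx.notMem_left).symm).resolve_right fun h =>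
      h12 (hx.symm.trans ((SameComponent.of_adj hzS hx.notMem_left h).symm.trans hz₂))

lemma sameComponent_of_forall_adj (hG : CriticalCut G S) (hI : G.IsIndepSet I) (hτS : τ ∈ S)
    (hSI : ∀ s ∈ S, s ∉ I → s = σ ∨ s = τ) (hi₁ : i₁ ∈ I) (hi₁S : i₁ ∉ S) (hi₂ : i₂ ∈ I)
    (hi₂S : i₂ ∉ S) (hσ₂ : ¬ G.Adj i₂ σ) (hτI : ∀ t ∈ S, t ∈ I → G.Adj τ t)
    (hτ : ∀ x, x ∉ S → ¬ G.SameComponent S x i₂ → G.Adj τ x) : G.SameComponent S i₁ i₂ := by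
  by_contra h12
  obtain ⟨c, hcS, hci₁⟩ := hG.exists_adj i₁ hi₁S
  have hc : G.SameComponent S c i₁ := .of_adj hcS hi₁S hci₁
  have hc₂ : ¬ G.SameComponent S c i₂ := fun h => h12 (hc.symm.trans h)
  have hσc := adj_of_sameComponent_of_forall_adj hG hτS hSI hτI hτ h12 hc
  have hτc := hτ c hcS hc₂
  have hci₂ := not_adj_of_not_sameComponent hcS hi₂S hc₂
  obtain ⟨j, hjS, hjc, hjn⟩ := hG.exists_mem_not_adj c
  have hjI : j ∈ I := by
    by_contra hjI
    rcases hSI j hjS hjI with rfl | rfl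
    exacts [hjn hσc, hjn hτc]
  have hi₂j := ne_of_mem_of_not_mem hjS hi₂S
  rcases hG.dominatesPair_or_dominatesExcept hjc hjn with
    hd' | ⟨y, hjy, hcy, hd'⟩ | ⟨y, hcy, hjy, hd'⟩
  · exact (hd' i₂ hi₂j.symm (ne_of_not_sameComponent hi₂S fun h => hc₂ h.symm)).elim
      (hI.not_adj hjI hi₂) (hci₂ ·)
  · have hyI : y ∉ I := fun hyI => hI.not_adj hjI hyI hjy
    have hy : ∀ i ∈ I, i ∉ S → i ≠ c → G.Adj y i := fun i hi hiS hic =>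
      (hd' i (ne_of_mem_of_not_mem hjS hiS).symm (ne_of_mem_of_not_mem hi hyI) hic).resolve_left
        (hI.not_adj hjI hi)
    have hy₂ := hy i₂ hi₂ hi₂S (ne_of_not_sameComponent hi₂S fun h => hc₂ h.symm)
    by_cases hyS : y ∈ S
    · rcases hSI y hyS hyI with rfl | rfl
      exacts [hσ₂ hy₂.symm, hcy hτc.symm]
    · have hy₁ := hy i₁ hi₁ hi₁S hci₁.ne.symm
      exact h12 ((SameComponent.of_adj hyS hi₁S hy₁).symm.trans (.of_adj hyS hi₂S hy₂))
  · have hyS := hG.mem_of_dominatesExcept hcS hcy hd'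
    have hy₂ : G.Adj y i₂ := (hd' i₂ (ne_of_not_sameComponent hi₂S fun h => hc₂ h.symm)
      (ne_of_mem_of_not_mem hyS hi₂S).symm hi₂j.symm).resolve_left hci₂
    by_cases hyI : y ∈ I
    · exact hI.not_adj hyI hi₂ hy₂
    rcases hSI y hyS hyI with rfl | rfl
    exacts [hσ₂ hy₂.symm, hjy (hτI j hjS hjI).symm]

lemma eq_of_not_adj_of_dominatesExcept (hI : G.IsIndepSet I)
    (hSI : ∀ s ∈ S, s ∉ I → s = σ ∨ s = τ) (hi₁ : i₁ ∈ I) (hi₁S : i₁ ∉ S) (hi₂S : i₂ ∉ S)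
    (hd : G.DominatesExcept i₁ σ i₂) (hxS : x ∈ S) (hxσ : x ≠ σ)
    (hx : ¬ G.Adj x σ) : x = τ := by
  refine (hSI x hxS fun hxI => hx ?_).resolve_left hxσ
  refine ((hd x (ne_of_mem_of_not_mem hxS hi₁S) hxσ (ne_of_mem_of_not_mem hxS hi₂S)).resolve_left
    (hI.not_adj hi₁ hxI)).symm

lemma adj_of_dominatesExcept (hG : CriticalCut G S) (hI : G.IsIndepSet I) (hτS : τ ∈ S)
    (hστ : σ ≠ τ) (hSI : ∀ s ∈ S, s ∉ I → s = σ ∨ s = τ) (hi₁ : i₁ ∈ I) (hi₁S : i₁ ∉ S)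
    (hi₂S : i₂ ∉ S) (hd : G.DominatesExcept i₁ σ i₂) : G.Adj i₁ τ := by
  obtain ⟨s, hs, hsσ, hn⟩ := hG.exists_mem_not_adj σ
  obtain rfl := eq_of_not_adj_of_dominatesExcept hI hSI hi₁ hi₁S hi₂S hd hs hsσ hn
  exact (hd s (ne_of_mem_of_not_mem hs hi₁S) hsσ (ne_of_mem_of_not_mem hs hi₂S)).resolve_right
    (hn ·.symm)

lemma not_dominatesExcept_of_adj (hG : CriticalCut G S) (hI : G.IsIndepSet I) (hσS : σ ∈ S)
    (hτS : τ ∈ S) (hστ : σ ≠ τ) (hτI : τ ∉ I) (hSI : ∀ s ∈ S, s ∉ I → s = σ ∨ s = τ)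
    (hi₁ : i₁ ∈ I) (hi₁S : i₁ ∉ S) (hi₂ : i₂ ∈ I) (hi₂S : i₂ ∉ S) (hσ₁ : G.Adj i₁ σ)
    (hσ₂ : ¬ G.Adj i₂ σ) : ¬ G.DominatesExcept i₁ σ i₂ := by
  intro hd
  have hσI : σ ∉ I := fun h => hI.not_adj hi₁ h hσ₁
  have eq_τ : ∀ {s}, s ∈ S → s ≠ σ → ¬ G.Adj s σ → s = τ :=
    eq_of_not_adj_of_dominatesExcept hI hSI hi₁ hi₁S hi₂S hd
  have hτ₁ := adj_of_dominatesExcept hG hI hτS hστ hSI hi₁ hi₁S hi₂S hd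
  obtain ⟨a, z, haS, haz, haσ, hzσ, hnaσ, hnzσ, hd'⟩ := hG.exists_mem_dominatesExcept σ
  obtain rfl := eq_τ haS haσ hnaσ
  have hzS : z ∉ S := fun hzS => haz.ne (eq_τ hzS hzσ hnzσ).symm
  have hz₁ : z ≠ i₁ := fun h => hnzσ (h ▸ hσ₁)
  by_cases hz₂ : z = i₂
  · subst hz₂
    by_cases hτJ : ∀ t ∈ S, t ∈ I → G.Adj a t
    · have hτ : ∀ x, x ∉ S → ¬ G.SameComponent S x z → G.Adj a x := fun x hx hxz =>
        (hd' x (ne_of_mem_of_not_mem haS hx).symm (ne_of_not_sameComponent hx hxz)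
          (ne_of_mem_of_not_mem hσS hx).symm).resolve_right
          (not_adj_of_not_sameComponent hzS hx fun h => hxz h.symm)
      have h12 := sameComponent_of_forall_adj hG hI haS hSI hi₁ hi₁S hi₂ hzS hσ₂ hτJ hτ
      exact hσ₂ (adj_of_sameComponent_of_dominatesExcept hG hI hσS hSI hi₁ hi₁S hd hτ₁
        (fun x hx hx₁ => hτ x hx fun h => hx₁ (h.trans h12.symm)) h12.symm hz₁).symm
    · push Not at hτJ
      obtain ⟨t, htS, htI, hτt⟩ := hτJ
      exact (hd' t (ne_of_mem_of_not_mem htI hτI) (ne_of_mem_of_not_mem htS hzS)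
        (ne_of_mem_of_not_mem htI hσI)).elim hτt (hI.not_adj hi₂ htI)
  · have hz : G.SameComponent S z i₁ :=
      .of_adj hzS hi₁S ((hd z hz₁ hzσ hz₂).resolve_right (hnzσ ·.symm)).symm
    have hτ : ∀ x, x ∉ S → ¬ G.SameComponent S x i₁ → G.Adj a x := fun x hx hx₁ =>
      (hd' x (ne_of_mem_of_not_mem haS hx).symm (fun h => hx₁ (h ▸ hz))
        (ne_of_mem_of_not_mem hσS hx).symm).resolve_right
        (not_adj_of_not_sameComponent hzS hx fun h => hx₁ (h.symm.trans hz))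
    exact hnzσ
      (adj_of_sameComponent_of_dominatesExcept hG hI hσS hSI hi₁ hi₁S hd hτ₁ hτ hz hz₁).symm

theorem eq_of_mem_sdiff (hG : CriticalCut G S) (hI : G.IsIndepSet I) {σ₁ σ₂ j : V}
    (hσ₁S : σ₁ ∈ S) (hσ₂S : σ₂ ∈ S) (hσ₁₂ : σ₁ ≠ σ₂) (hσ₁I : σ₁ ∉ I) (hσ₂I : σ₂ ∉ I)
    (hSI : ∀ s ∈ S, s ∉ I → s = σ₁ ∨ s = σ₂) (hjS : j ∈ S) (hjI : j ∈ I)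
    (hi₁ : i₁ ∈ I) (hi₁S : i₁ ∉ S) (hi₂ : i₂ ∈ I) (hi₂S : i₂ ∉ S) : i₁ = i₂ := by
  by_contra h12
  have hSI' : ∀ s ∈ S, s ∉ I → s = σ₂ ∨ s = σ₁ := fun s hs hsI => (hSI s hs hsI).symm
  have key : ∀ {i i' y}, i ∈ I → i ∉ S → i' ∈ I → i' ∉ S → G.Adj i y → ¬ G.Adj i' y →
      G.DominatesExcept i y i' → False := by
    intro i i' y hi hiS hi' hi'S hiy hi'y hd
    rcases hSI y (hG.mem_of_dominatesExcept hiS hiy hd) fun hyI => hI.not_adj hi hyI hiy with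
      rfl | rfl
    · exact not_dominatesExcept_of_adj hG hI hσ₁S hσ₂S hσ₁₂ hσ₂I hSI hi hiS hi' hi'S hiy hi'y hd
    · exact not_dominatesExcept_of_adj hG hI hσ₂S hσ₁S hσ₁₂.symm hσ₁I hSI' hi hiS hi' hi'S hiy
        hi'y hd
  rcases hG.dominatesPair_or_dominatesExcept h12 (hI.not_adj hi₁ hi₂) with
    hd | ⟨y, h₁y, h₂y, hd⟩ | ⟨y, h₂y, h₁y, hd⟩
  · exact (hd j (ne_of_mem_of_not_mem hjS hi₁S) (ne_of_mem_of_not_mem hjS hi₂S)).elim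
      (hI.not_adj hi₁ hjI) (hI.not_adj hi₂ hjI)
  · exact key hi₁ hi₁S hi₂ hi₂S h₁y h₂y hd
  · exact key hi₂ hi₂S hi₁ hi₁S h₂y h₁y hd

end CriticalCut

theorem CriticalCut.three_le_card_sdiff [DecidableEq V] {G : SimpleGraph V} {S I : Finset V}
    (hG : CriticalCut G S) (hI : G.IsIndepSet I) (hcard : I.card = S.card) (hS : 3 ≤ S.card) :
    3 ≤ (I \ S).card := by
  have hdiff : (S \ I).card = (I \ S).card := Finset.card_sdiff_comm hcard.symm
  by_contra! hlt
  rcases (show (S \ I).card ≤ 1 ∨ (S \ I).card = 2 by omega) with h1 | h2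
  · have : Nonempty V := ⟨(Finset.card_pos.1 (show 0 < S.card by omega)).choose⟩
    obtain ⟨σ, hσ⟩ := Finset.card_le_one_iff_subset_singleton.1 h1
    have hIS : I ⊆ S := Finset.coe_subset.1 <| hG.subset_of_forall_mem_ne hI fun s hs hsσ => by
      by_contra hsI
      exact hsσ (Finset.mem_singleton.1 (hσ (Finset.mem_sdiff.2 ⟨hs, hsI⟩)))
    exact hG.not_isIndepSet (Finset.eq_of_subset_of_card_le hIS hcard.ge ▸ hI)
  · obtain ⟨σ₁, σ₂, hσ₁₂, hσ⟩ := Finset.card_eq_two.1 h2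
    obtain ⟨i₁, i₂, hi₁₂, hi⟩ := Finset.card_eq_two.1 (hdiff ▸ h2)
    obtain ⟨j, hj⟩ : (S ∩ I).Nonempty := by
      have := Finset.card_sdiff_add_card_inter S I
      exact Finset.card_pos.1 (by omega)
    have hσ₁ : σ₁ ∈ S \ I := by simp [hσ]
    have hσ₂ : σ₂ ∈ S \ I := by simp [hσ]
    have hi₁ : i₁ ∈ I \ S := by simp [hi]
    have hi₂ : i₂ ∈ I \ S := by simp [hi]
    rw [Finset.mem_sdiff] at hσ₁ hσ₂ hi₁ hi₂
    rw [Finset.mem_inter] at hj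
    refine hi₁₂ (hG.eq_of_mem_sdiff hI hσ₁.1 hσ₂.1 hσ₁₂ hσ₁.2 hσ₂.2 (fun s hs hsI => ?_) hj.1 hj.2
      hi₁.1 hi₁.2 hi₂.1 hi₂.2)
    simpa [hσ] using Finset.mem_sdiff.2 ⟨hs, hsI⟩

/-- let `G` be a maximal `3`-`γc`-vertex critical graph with
`α(G) = κ(G) ≥ 4`, let `S` be a minimum cut set, and suppose every component of
`G - S` has more than one vertex (equivalently, every vertex outside `S` has a
neighbour outside `S`).  Then every maximum independent set `I` satisfies
`|I \ S| ≥ 3`. -/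
theorem stmt_12 (G : SimpleGraph V) [Fintype V] [DecidableEq V]
    (h : MaximalVertexCritical3 G)
    (hak : alpha G = kappa G) (h4 : 4 ≤ kappa G)
    (S : Finset V) (hScut : ¬ (G.induce (↑S : Set V)ᶜ).Connected)
    (hSmin : S.card = kappa G)
    (hcomp : ∀ v : V, v ∉ S → ∃ u : V, u ∉ S ∧ G.Adj u v) :
    ∀ I : Finset V, (↑I : Set V).Pairwise (fun u v => ¬ G.Adj u v) →
      I.card = alpha G → 3 ≤ (I \ S).card := by
  intro I hI hIcard
  have hout := exists_notMem_of_card_le_kappa (G := G)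
    (Finset.card_pos.1 (by omega)) hSmin.le
  exact (h.criticalCut hScut hout hcomp).three_le_card_sdiff hI (by omega) (by omega)
end
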